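/- Let G and g be differentiable concave functions on an interval, let x be a point and δ > 0 with x−δ, x+δ in the interval. Define C⁻ = g'(x−δ) − g'(x) ≥ 0 and C⁺ = g'(x) − g'(x+δ) ≥ 0. Then |G'(x) − g'(x)| ≤ δ⁻¹ (|G(x−δ)−g(x−δ)| + |G(x)−g(x)| + |G(x+δ)−g(x+δ)|) + C⁺ + C⁻. -/
import Mathlib


/-- Bound on the difference of derivatives of two concave functions (Lemma on concave
functions from the paper). -/
theorem concave_deriv_diff_bound (G g G' g' : ℝ → ℝ) (s : Set ℝ) (hs : IsOpen s)
    (x δ : ℝ) (hδ : 0 < δ) (hsub : Set.Icc (x - δ) (x + δ) ⊆ s)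
    (hGconc : ConcaveOn ℝ s G) (hgconc : ConcaveOn ℝ s g)
    (hG : ∀ y ∈ s, HasDerivAt G (G' y) y) (hg : ∀ y ∈ s, HasDerivAt g (g' y) y) :
    |G' x - g' x| ≤
      δ⁻¹ * (|G (x - δ) - g (x - δ)| + |G x - g x| + |G (x + δ) - g (x + δ)|)
        + (g' x - g' (x + δ)) + (g' (x - δ) - g' x) := by
  have ha : x - δ ∈ s := hsub ⟨le_rfl, by linarith⟩
  have hx : x ∈ s := hsub ⟨by linarith, by linarith⟩
  have hc : x + δ ∈ s := hsub ⟨by linarith, le_rfl⟩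
  have hax : x - δ < x := by linarith
  have hxc : x < x + δ := by linarith
  have hδ' : (0:ℝ) < δ⁻¹ := inv_pos.mpr hδ
  have hsl : ∀ (f f' : ℝ → ℝ), ConcaveOn ℝ s f → (∀ y ∈ s, HasDerivAt f (f' y) y) →
      ∀ a b : ℝ, a ∈ s → b ∈ s → a < b →
      f' b ≤ (f b - f a) / (b - a) ∧ (f b - f a) / (b - a) ≤ f' a := by
    intro f f' hconc hder a b haS hbS hab
    have h1 := hconc.le_slope_of_hasDerivAt haS hbS hab (hder b hbS)
    have h2 := hconc.slope_le_of_hasDerivAt haS hbS hab (hder a haS)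
    rw [slope_def_field] at h1 h2
    exact ⟨h1, h2⟩
  have hGL := hsl G G' hGconc hG (x - δ) x ha hx hax
  have hgL := hsl g g' hgconc hg (x - δ) x ha hx hax
  have hGR := hsl G G' hGconc hG x (x + δ) hx hc hxc
  have hgR := hsl g g' hgconc hg x (x + δ) hx hc hxc
  have d1 : x - (x - δ) = δ := by ring
  have d2 : x + δ - x = δ := by ring
  rw [d1] at hGL hgL
  rw [d2] at hGR hgR
  obtain ⟨k1, k1'⟩ := hGL   -- G' x ≤ (G x - G (x-δ))/δ ≤ G' (x-δ)
  obtain ⟨k2, k2'⟩ := hgL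
  obtain ⟨k3, k3'⟩ := hGR   -- G' (x+δ) ≤ (G (x+δ) - G x)/δ ≤ G' x
  obtain ⟨k4, k4'⟩ := hgR
  have hCm : 0 ≤ g' (x - δ) - g' x := by linarith
  have hCp : 0 ≤ g' x - g' (x + δ) := by linarith
  have hsplit : δ⁻¹ * (|G (x - δ) - g (x - δ)| + |G x - g x| + |G (x + δ) - g (x + δ)|)
      = δ⁻¹ * |G (x - δ) - g (x - δ)| + δ⁻¹ * |G x - g x|
        + δ⁻¹ * |G (x + δ) - g (x + δ)| := by ring
  have hdiv : ∀ A : ℝ, A / δ = δ⁻¹ * A := fun A => by rw [div_eq_mul_inv]; ring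
  rw [hdiv] at k1 k1' k2 k2' k3 k3' k4 k4'
  have p1 : δ⁻¹ * (G (x - δ) - g (x - δ)) ≤ δ⁻¹ * |G (x - δ) - g (x - δ)| :=
    mul_le_mul_of_nonneg_left (le_abs_self _) hδ'.le
  have p1' : δ⁻¹ * -|G (x - δ) - g (x - δ)| ≤ δ⁻¹ * (G (x - δ) - g (x - δ)) :=
    mul_le_mul_of_nonneg_left (neg_abs_le _) hδ'.le
  have p2 : δ⁻¹ * (G x - g x) ≤ δ⁻¹ * |G x - g x| :=
    mul_le_mul_of_nonneg_left (le_abs_self _) hδ'.le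
  have p2' : δ⁻¹ * -|G x - g x| ≤ δ⁻¹ * (G x - g x) :=
    mul_le_mul_of_nonneg_left (neg_abs_le _) hδ'.le
  have p3 : δ⁻¹ * (G (x + δ) - g (x + δ)) ≤ δ⁻¹ * |G (x + δ) - g (x + δ)| :=
    mul_le_mul_of_nonneg_left (le_abs_self _) hδ'.le
  have p3' : δ⁻¹ * -|G (x + δ) - g (x + δ)| ≤ δ⁻¹ * (G (x + δ) - g (x + δ)) :=
    mul_le_mul_of_nonneg_left (neg_abs_le _) hδ'.le
  have q1 : 0 ≤ δ⁻¹ * |G (x - δ) - g (x - δ)| := mul_nonneg hδ'.le (abs_nonneg _)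
  have q3 : 0 ≤ δ⁻¹ * |G (x + δ) - g (x + δ)| := mul_nonneg hδ'.le (abs_nonneg _)
  rw [abs_le, hsplit]
  constructor
  · linarith
  · linarith
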